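/- Fix an integer b ≥ 2 and define M̂(x) := x + ((b−1)/2)x². Let x* > 1 denote the unique solution in (1, ∞) of 1 + x = e^{x/2}. Then for all K > 0, ℓ > 0, and r ∈ ℕ with (b−1)K/(2ℓ) ≤ x*, the r-fold iterate satisfies ℓ · M̂^r(K/ℓ) ≥ K · exp(r (b−1) K / (4ℓ)). -/

import Mathlib

/-!
Write `c = (b - 1)/2`, so that `M̂ x = x (1 + c x)` and the claim reads
`M̂^r(x₀) ≥ x₀ · exp(c x₀ / 2)^r` for `x₀ = K/ℓ`. Since the iterates only grow, it suffices that
one step multiplies by at least `exp(c x₀ / 2)`, i.e. `exp(c x₀ / 2) ≤ 1 + c x₀`. By convexity of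
`exp`, the inequality `exp(y/2) ≤ 1 + y`, an equality at `y = 0` and at `y = x*`, holds on all of
`[0, x*]`, and `c x₀ ≤ x*` is exactly the hypothesis.
-/

open Filter Real

noncomputable section

/-- The quadratic map `M̂(x) = x + ((b-1)/2)x²`; its `r`-fold composition is `(Mhat b)^[r]`. -/
def Mhat (b : ℕ) (x : ℝ) : ℝ := x + ((b : ℝ) - 1) / 2 * x ^ 2

theorem Real.exp_half_le_one_add_of_le {x y : ℝ} (hy : 0 ≤ y) (hyx : y ≤ x)
    (hx : exp (x / 2) ≤ 1 + x) : exp (y / 2) ≤ 1 + y := by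
  obtain rfl | hlt := hyx.eq_or_lt
  · exact hx
  have hx0 : 0 < x := hy.trans_lt hlt
  set t := y / x with ht
  have ht0 : 0 ≤ t := div_nonneg hy hx0.le
  have ht1 : t ≤ 1 := (div_le_one hx0).2 hyx
  calc exp (y / 2) = exp ((1 - t) • (0 : ℝ) + t • (x / 2)) := by
        congr 1; simp only [ht, smul_eq_mul]; field_simp; ring
    _ ≤ (1 - t) • exp 0 + t • exp (x / 2) :=
        convexOn_exp.2 (Set.mem_univ _) (Set.mem_univ _) (by linarith) ht0 (by ring)
    _ ≤ (1 - t) * 1 + t * (1 + x) := by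
        rw [exp_zero, smul_eq_mul, smul_eq_mul]; gcongr
    _ = 1 + y := by simp only [ht]; field_simp; ring

theorem Function.pow_mul_le_iterate {α : Type*} [Semiring α] [PartialOrder α]
    [IsOrderedRing α] {f : α → α} {a x₀ : α} (ha : 1 ≤ a) (hx₀ : 0 ≤ x₀)
    (hf : ∀ y, x₀ ≤ y → a * y ≤ f y) (n : ℕ) : a ^ n * x₀ ≤ f^[n] x₀ := by
  induction n with
  | zero => simp
  | succ n ih =>
    have hx₀_le : x₀ ≤ f^[n] x₀ := (le_mul_of_one_le_left hx₀ (one_le_pow₀ ha)).trans ih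
    calc a ^ (n + 1) * x₀ = a * (a ^ n * x₀) := by rw [pow_succ', mul_assoc]
      _ ≤ a * f^[n] x₀ := by gcongr; exact zero_le_one.trans ha
      _ ≤ f^[n + 1] x₀ := by rw [Function.iterate_succ_apply']; exact hf _ hx₀_le

theorem Mhat_eq_mul (b : ℕ) (x : ℝ) : Mhat b x = x * (1 + ((b : ℝ) - 1) / 2 * x) := by
  rw [Mhat]; ring

theorem exp_pow_mul_le_Mhat_iterate {b : ℕ} (hb : 1 ≤ b) {x₀ xstar : ℝ} (hx₀ : 0 ≤ x₀)
    (hxstar : exp (xstar / 2) ≤ 1 + xstar) (hle : ((b : ℝ) - 1) / 2 * x₀ ≤ xstar) (n : ℕ) :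
    exp (((b : ℝ) - 1) / 2 * x₀ / 2) ^ n * x₀ ≤ (Mhat b)^[n] x₀ := by
  set c : ℝ := ((b : ℝ) - 1) / 2
  have hc : 0 ≤ c := by
    have : (1 : ℝ) ≤ b := by exact_mod_cast hb
    simp only [c]; linarith
  have hstep : exp (c * x₀ / 2) ≤ 1 + c * x₀ :=
    exp_half_le_one_add_of_le (mul_nonneg hc hx₀) hle hxstar
  refine Function.pow_mul_le_iterate (one_le_exp (by positivity)) hx₀ (fun y hy ↦ ?_) n
  rw [Mhat_eq_mul, mul_comm]
  gcongr
  · linarith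
  · exact hstep.trans (by gcongr)

theorem Mhat_iterate_growth_general
    (b : ℕ) (hb : 2 ≤ b) (xstar : ℝ)
    (hx2 : 1 + xstar = Real.exp (xstar / 2)) :
    ∀ K L : ℝ, 0 < K → 0 < L → ∀ r : ℕ,
      ((b : ℝ) - 1) * K / (2 * L) ≤ xstar →
      K * Real.exp (r * ((b : ℝ) - 1) * K / (4 * L)) ≤ L * (Mhat b)^[r] (K / L) := by
  intro K L hK hL r hle
  have hle' : ((b : ℝ) - 1) / 2 * (K / L) ≤ xstar := by
    convert hle using 1; field_simp
  have hiter := exp_pow_mul_le_Mhat_iterate (by omega) (div_pos hK hL).le hx2.ge hle' r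
  calc K * exp (r * ((b : ℝ) - 1) * K / (4 * L))
      = L * (exp (((b : ℝ) - 1) / 2 * (K / L) / 2) ^ r * (K / L)) := by
        rw [← exp_nat_mul]; field_simp; ring_nf
    _ ≤ L * (Mhat b)^[r] (K / L) := by gcongr

/-- **Iterate growth bound for `M̂`.** If `x* > 1` solves `1 + x = e^{x/2}`, then for all
`K > 0`, `ℓ > 0` and `r ∈ ℕ` with `(b-1)K/(2ℓ) ≤ x*`, one has
`ℓ · M̂^r(K/ℓ) ≥ K exp(r(b-1)K/(4ℓ))`. -/
theorem Mhat_iterate_growth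
    (b : ℕ) (hb : 2 ≤ b) (xstar : ℝ) (hx1 : 1 < xstar)
    (hx2 : 1 + xstar = Real.exp (xstar / 2)) :
    ∀ K L : ℝ, 0 < K → 0 < L → ∀ r : ℕ,
      ((b : ℝ) - 1) * K / (2 * L) ≤ xstar →
      K * Real.exp (r * ((b : ℝ) - 1) * K / (4 * L)) ≤ L * (Mhat b)^[r] (K / L) :=
  Mhat_iterate_growth_general b hb xstar hx2
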